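/- Let T be a finite tree of order n ≥ 2 and let k be an integer with k ≤ 1. Then T contains a global defensive k-alliance and γ_k^d(T) ≥ ⌈(n+2)/(3-k)⌉. -/

import Mathlib

open Finset

variable {V : Type*}

/-- `degIn G S v` is the number of neighbors that `v` has in `S` (denoted `δ_S(v)`). -/
def degIn [Fintype V] [DecidableEq V] (G : SimpleGraph V) [DecidableRel G.Adj]
    (S : Finset V) (v : V) : ℕ :=
  (G.neighborFinset v ∩ S).card

/-- A nonempty set `S` is a defensive `k`-alliance in `G` if every vertex of `S` has at least
`k` more neighbors inside `S` than outside. -/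
def IsDefensiveKAlliance [Fintype V] [DecidableEq V] (G : SimpleGraph V) [DecidableRel G.Adj]
    (k : ℤ) (S : Finset V) : Prop :=
  S.Nonempty ∧ ∀ v ∈ S, (degIn G Sᶜ v : ℤ) + k ≤ (degIn G S v : ℤ)

/-- The defensive `k`-alliance number: minimum cardinality of a defensive `k`-alliance. -/
noncomputable def defensiveAllianceNum [Fintype V] [DecidableEq V] (G : SimpleGraph V)
    [DecidableRel G.Adj] (k : ℤ) : ℕ :=
  sInf {m : ℕ | ∃ S : Finset V, IsDefensiveKAlliance G k S ∧ S.card = m}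

/-- `S` is a dominating set: every vertex outside `S` has a neighbor in `S`. -/
def IsDominatingSet (G : SimpleGraph V) (S : Finset V) : Prop :=
  ∀ v, v ∉ S → ∃ u ∈ S, G.Adj u v

/-- A global defensive `k`-alliance is a defensive `k`-alliance which is also dominating. -/
def IsGlobalDefensiveKAlliance [Fintype V] [DecidableEq V] (G : SimpleGraph V)
    [DecidableRel G.Adj] (k : ℤ) (S : Finset V) : Prop :=
  IsDefensiveKAlliance G k S ∧ IsDominatingSet G S

/-- The global defensive `k`-alliance number `γ_k^d(G)`. -/
noncomputable def globalDefensiveAllianceNum [Fintype V] [DecidableEq V] (G : SimpleGraph V)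
    [DecidableRel G.Adj] (k : ℤ) : ℕ :=
  sInf {m : ℕ | ∃ S : Finset V, IsGlobalDefensiveKAlliance G k S ∧ S.card = m}

/-! In a global defensive `k`-alliance `S` of a graph with `m` edges and `n` vertices, let `c` be
the number of edges between `S` and its complement. Domination gives `c ≥ n - |S|`, and summing the
defensive condition over `S` gives `2 e(S) ≥ c + k |S|`, where `e(S)` counts the edges inside `S`.
Hence `2m ≥ 2 e(S) + 2c ≥ 3c + k|S| ≥ 3(n - |S|) + k|S|`; for a tree `m = n - 1`, and this becomes
`n + 2 ≤ (3 - k) |S|`. -/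

section
variable [Fintype V] [DecidableEq V] (G : SimpleGraph V) [DecidableRel G.Adj]

lemma degIn_add_degIn_compl (S : Finset V) (v : V) :
    degIn G S v + degIn G Sᶜ v = G.degree v := by
  rw [degIn, degIn, ← sdiff_eq_inter_compl, card_inter_add_card_sdiff,
    G.card_neighborFinset_eq_degree]

lemma sum_degIn_comm (X Y : Finset V) :
    ∑ v ∈ X, degIn G Y v = ∑ u ∈ Y, degIn G X u := by
  have h (X Y : Finset V) : ∑ v ∈ X, degIn G Y v = ∑ v ∈ X, ∑ u ∈ Y, if G.Adj v u then 1 else 0 :=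
    sum_congr rfl fun v _ => by
      rw [← card_filter, degIn]
      congr 1
      ext u
      simp [and_comm]
  rw [h, h, sum_comm]
  simp only [G.adj_comm]

lemma two_mul_card_edgeFinset_eq_sum_degIn (S : Finset V) :
    2 * #G.edgeFinset =
      ∑ v ∈ S, degIn G S v + 2 * ∑ v ∈ S, degIn G Sᶜ v + ∑ v ∈ Sᶜ, degIn G Sᶜ v := by
  rw [← G.sum_degrees_eq_twice_card_edges, ← sum_add_sum_compl S]
  simp only [← degIn_add_degIn_compl G S, sum_add_distrib, sum_degIn_comm G S Sᶜ]
  ring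

variable {G}

lemma IsDominatingSet.card_compl_le_sum_degIn {S : Finset V} (h : IsDominatingSet G S) :
    #Sᶜ ≤ ∑ v ∈ Sᶜ, degIn G S v := by
  rw [card_eq_sum_ones]
  refine sum_le_sum fun v hv => card_pos.mpr ?_
  obtain ⟨u, hu, hadj⟩ := h v (mem_compl.mp hv)
  exact ⟨u, mem_inter.mpr ⟨(G.mem_neighborFinset v u).mpr hadj.symm, hu⟩⟩

lemma IsDefensiveKAlliance.sum_degIn_compl_add_le {k : ℤ} {S : Finset V}
    (h : IsDefensiveKAlliance G k S) :
    ∑ v ∈ S, (degIn G Sᶜ v : ℤ) + k * #S ≤ ∑ v ∈ S, (degIn G S v : ℤ) := by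
  simpa [sum_add_distrib, mul_comm] using sum_le_sum h.2

lemma IsGlobalDefensiveKAlliance.three_mul_card_compl_add_le {k : ℤ} {S : Finset V}
    (h : IsGlobalDefensiveKAlliance G k S) :
    3 * (#Sᶜ : ℤ) + k * #S ≤ 2 * #G.edgeFinset := by
  have hdom : #Sᶜ ≤ ∑ v ∈ S, degIn G Sᶜ v :=
    sum_degIn_comm G S Sᶜ ▸ h.2.card_compl_le_sum_degIn
  have hsum := two_mul_card_edgeFinset_eq_sum_degIn G S
  zify at hdom hsum
  have : 0 ≤ ∑ v ∈ Sᶜ, (degIn G Sᶜ v : ℤ) := sum_nonneg fun _ _ => Nat.cast_nonneg _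
  linarith [h.1.sum_degIn_compl_add_le]

lemma IsGlobalDefensiveKAlliance.card_add_two_le_of_isTree (hT : G.IsTree) {k : ℤ}
    {S : Finset V} (h : IsGlobalDefensiveKAlliance G k S) :
    (Fintype.card V : ℤ) + 2 ≤ (3 - k) * #S := by
  have hm : (#G.edgeFinset : ℤ) + 1 = Fintype.card V := by exact_mod_cast hT.card_edgeFinset
  have hc : (#Sᶜ : ℤ) = Fintype.card V - #S := by
    rw [card_compl, Nat.cast_sub (card_le_univ S)]
  linarith [h.three_mul_card_compl_add_le]

lemma isGlobalDefensiveKAlliance_univ [Nonempty V] {k : ℤ} (hdeg : ∀ v, k ≤ G.degree v) :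
    IsGlobalDefensiveKAlliance G k univ := by
  refine ⟨⟨univ_nonempty, fun v _ => ?_⟩, fun v hv => absurd (mem_univ v) hv⟩
  simpa [degIn, G.card_neighborFinset_eq_degree] using hdeg v

lemma exists_card_eq_globalDefensiveAllianceNum {k : ℤ}
    (h : ∃ S : Finset V, IsGlobalDefensiveKAlliance G k S) :
    ∃ S : Finset V, IsGlobalDefensiveKAlliance G k S ∧ #S = globalDefensiveAllianceNum G k := by
  obtain ⟨S, hS⟩ := h
  exact Nat.sInf_mem (s := {m | ∃ S, IsGlobalDefensiveKAlliance G k S ∧ #S = m}) ⟨_, S, hS, rfl⟩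

end

/-- Theorem: a tree `T` of order `n ≥ 2` contains a global defensive `k`-alliance for every
`k ≤ 1`, and `γ_k^d(T) ≥ ⌈(n+2)/(3-k)⌉`. -/
theorem tree_globalDefensiveAllianceNum_lower_bound [Fintype V] [DecidableEq V]
    (G : SimpleGraph V) [DecidableRel G.Adj] (hT : G.IsTree) (hn : 2 ≤ Fintype.card V)
    (k : ℤ) (hk : k ≤ 1) :
    (∃ S : Finset V, IsGlobalDefensiveKAlliance G k S) ∧
      ⌈((Fintype.card V : ℚ) + 2) / (3 - (k : ℚ))⌉ ≤ (globalDefensiveAllianceNum G k : ℤ) := by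
  have : Nontrivial V := Fintype.one_lt_card_iff_nontrivial.mp hn
  have hexists : ∃ S : Finset V, IsGlobalDefensiveKAlliance G k S :=
    ⟨univ, isGlobalDefensiveKAlliance_univ fun v => by
      have := hT.connected.preconnected.degree_pos_of_nontrivial v
      omega⟩
  refine ⟨hexists, ?_⟩
  obtain ⟨S, hS, hcard⟩ := exists_card_eq_globalDefensiveAllianceNum hexists
  have hk3 : (0 : ℚ) < 3 - k := by
    have : (k : ℚ) ≤ 1 := by exact_mod_cast hk
    linarith
  rw [← hcard, Int.ceil_le, div_le_iff₀ hk3]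
  exact_mod_cast (mul_comm (3 - k) _ ▸ hS.card_add_two_le_of_isTree hT)
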